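/- arXiv:2305.00625 — 3 statements merged into one kernel-verified Lean document; each statement's English description precedes it below -/
import Mathlib

section
/- For every integer n ≥ 3, the sum ∑_{j=2}^{n-1} C(n,j) (j-1)^{2(j-1)} (n-j)^{2(n-j)} is at most (3/2)·e·n·(n-1)^{2(n-1)}, where C(n,j) denotes the binomial coefficient and e is Euler's number. -/
/-!
Every summand is at most `n ^ n * (n - 1) ^ (n - 2)`: this rests on
`C(n, j) j ^ j (n - j) ^ (n - j) ≤ n ^ n`, a single term of the binomial expansion of
`(j + (n - j)) ^ n`. Summing the `n - 2` terms gives at most `n ^ n * (n - 1) ^ (n - 1)`, and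
`n ^ n ≤ e * n * (n - 1) ^ (n - 1)` because `(1 + 1/m) ^ m ≤ e`. This yields the bound with
constant `1` in place of `3 / 2`.
-/

open Finset

theorem Nat.choose_mul_pow_mul_pow_le_add_pow (a b : ℕ) {n j : ℕ} (hj : j ≤ n) :
    n.choose j * a ^ j * b ^ (n - j) ≤ (a + b) ^ n := by
  rw [add_pow]
  calc n.choose j * a ^ j * b ^ (n - j) = a ^ j * b ^ (n - j) * n.choose j := by ring
    _ ≤ ∑ k ∈ range (n + 1), a ^ k * b ^ (n - k) * n.choose k :=
      single_le_sum (f := fun k ↦ a ^ k * b ^ (n - k) * n.choose k) (fun _ _ ↦ Nat.zero_le _)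
        (mem_range_succ_iff.mpr hj)

/-- Split `(j - 1) ^ (2 (j - 1))` as `(j - 1) ^ j * (j - 1) ^ (j - 2)` and `(n - j) ^ (2 (n - j))`
into two halves: one factor of each goes into the binomial bound, the other two are at most
`(n - 1) ^ (n - 2)`. -/
theorem Nat.choose_mul_sub_one_pow_mul_sub_pow_le {n j : ℕ} (hj₂ : 2 ≤ j) (hjn : j ≤ n) :
    n.choose j * (j - 1) ^ (2 * (j - 1)) * (n - j) ^ (2 * (n - j)) ≤
      n ^ n * (n - 1) ^ (n - 2) := by
  have hsplit : 2 * (j - 1) = j + (j - 2) := by omega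
  have hrest : (j - 2) + (n - j) = n - 2 := by omega
  calc n.choose j * (j - 1) ^ (2 * (j - 1)) * (n - j) ^ (2 * (n - j))
      = (n.choose j * (j - 1) ^ j * (n - j) ^ (n - j)) *
          ((j - 1) ^ (j - 2) * (n - j) ^ (n - j)) := by
        rw [hsplit, two_mul, pow_add, pow_add]; ring
    _ ≤ (n.choose j * j ^ j * (n - j) ^ (n - j)) * ((n - 1) ^ (j - 2) * (n - 1) ^ (n - j)) := by
        gcongr <;> omega
    _ ≤ n ^ n * (n - 1) ^ (n - 2) := by
        rw [← pow_add, hrest]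
        gcongr
        simpa [Nat.add_sub_cancel' hjn] using Nat.choose_mul_pow_mul_pow_le_add_pow j (n - j) hjn

theorem Nat.sum_choose_mul_sub_one_pow_mul_sub_pow_le (n : ℕ) :
    ∑ j ∈ Icc 2 (n - 1), n.choose j * (j - 1) ^ (2 * (j - 1)) * (n - j) ^ (2 * (n - j)) ≤
      n ^ n * (n - 1) ^ (n - 1) := by
  calc _ ≤ #(Icc 2 (n - 1)) • (n ^ n * (n - 1) ^ (n - 2)) :=
        sum_le_card_nsmul _ _ _ fun j hj ↦ by
          rw [mem_Icc] at hj
          exact Nat.choose_mul_sub_one_pow_mul_sub_pow_le hj.1 (by omega)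
    _ ≤ n ^ n * (n - 1) ^ (n - 1) := by
        rw [Nat.card_Icc, smul_eq_mul]
        rcases Nat.lt_or_ge n 2 with hn | hn
        · simp [show n - 1 + 1 - 2 = 0 by omega]
        · obtain ⟨m, rfl⟩ := Nat.exists_eq_add_of_le hn
          simp only [show 2 + m - 2 = m by omega, show 2 + m - 1 = m + 1 by omega]
          calc m * ((2 + m) ^ (2 + m) * (m + 1) ^ m)
              ≤ (m + 1) * ((2 + m) ^ (2 + m) * (m + 1) ^ m) := by gcongr; omega
            _ = _ := by ring

theorem Real.add_one_pow_le_exp_mul_pow (m : ℕ) : ((m : ℝ) + 1) ^ m ≤ exp 1 * (m : ℝ) ^ m := by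
  rcases eq_or_ne m 0 with rfl | hm
  · simp [one_le_exp zero_le_one]
  calc ((m : ℝ) + 1) ^ m = (1 + (m : ℝ)⁻¹) ^ m * (m : ℝ) ^ m := by
        rw [← mul_pow, add_mul, inv_mul_cancel₀ (by exact_mod_cast hm), one_mul, add_comm]
    _ ≤ exp 1 * (m : ℝ) ^ m := by gcongr; exact one_add_inv_pow_le_exp

theorem Real.pow_self_le_exp_mul_mul_sub_one_pow {n : ℕ} (hn : 1 ≤ n) :
    (n : ℝ) ^ n ≤ exp 1 * n * ((n : ℝ) - 1) ^ (n - 1) := by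
  obtain ⟨m, rfl⟩ := Nat.exists_eq_add_of_le' hn
  push_cast
  rw [add_sub_cancel_right, pow_succ]
  nlinarith [add_one_pow_le_exp_mul_pow m, (m.cast_nonneg : (0 : ℝ) ≤ m)]

theorem stmt_0 (n : ℕ) (hn : 3 ≤ n) :
    ∑ j ∈ Finset.Icc 2 (n - 1),
      (n.choose j : ℝ) * ((j : ℝ) - 1) ^ (2 * (j - 1)) * ((n : ℝ) - (j : ℝ)) ^ (2 * (n - j))
      ≤ (3 / 2) * Real.exp 1 * n * ((n : ℝ) - 1) ^ (2 * (n - 1)) := by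
  have hcast : ∑ j ∈ Icc 2 (n - 1),
      (n.choose j : ℝ) * ((j : ℝ) - 1) ^ (2 * (j - 1)) * ((n : ℝ) - (j : ℝ)) ^ (2 * (n - j)) =
      ((∑ j ∈ Icc 2 (n - 1),
        n.choose j * (j - 1) ^ (2 * (j - 1)) * (n - j) ^ (2 * (n - j)) : ℕ) : ℝ) := by
    push_cast
    refine sum_congr rfl fun j hj ↦ ?_
    rw [mem_Icc] at hj
    rw [Nat.cast_sub (by omega : 1 ≤ j), Nat.cast_sub (by omega : j ≤ n), Nat.cast_one]
  have hpos : (0 : ℝ) ≤ (n : ℝ) - 1 := sub_nonneg.mpr (by exact_mod_cast (by omega : 1 ≤ n))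
  calc _ ≤ (n : ℝ) ^ n * ((n : ℝ) - 1) ^ (n - 1) := by
        rw [hcast, ← Nat.cast_pred (by omega : 0 < n)]
        exact_mod_cast Nat.sum_choose_mul_sub_one_pow_mul_sub_pow_le n
    _ ≤ Real.exp 1 * n * ((n : ℝ) - 1) ^ (n - 1) * ((n : ℝ) - 1) ^ (n - 1) := by
        gcongr
        exact Real.pow_self_le_exp_mul_mul_sub_one_pow (by omega)
    _ = Real.exp 1 * n * ((n : ℝ) - 1) ^ (2 * (n - 1)) := by ring
    _ ≤ (3 / 2) * Real.exp 1 * n * ((n : ℝ) - 1) ^ (2 * (n - 1)) := by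
        have : 0 ≤ Real.exp 1 * n * ((n : ℝ) - 1) ^ (2 * (n - 1)) := by positivity
        linarith
end

section
/- Let f : ℝ → ℝ be bounded with bounded derivative, and define for x ∈ ℝ the principal value integral (HΛ^{1/2}f)(x) = p.v. ∫_ℝ sgn(x-y)(f(x)-f(y))/|x-y|^{3/2} dy. Then for every δ > 0 and every x ∈ ℝ, |(HΛ^{1/2}f)(x)| ≤ 12 δ^{-1/2} ‖f‖_{L^∞} + 8 δ^{1/2} ‖f'‖_{L^∞}. -/
/-!
Split the truncated integral at `|x - y| = δ`. Near the diagonal the mean value theorem gives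
`|f x - f y| ≤ ‖f'‖ |x - y|`, so the integrand is at most `‖f'‖ |x - y|^{-1/2}`, whose integral over
`|x - y| ≤ δ` is `4 ‖f'‖ δ^{1/2}`; far from it `|f x - f y| ≤ 2 ‖f‖`, and `2 ‖f‖ |x - y|^{-3/2}`
integrates to `8 ‖f‖ δ^{-1/2}` over `|x - y| > δ`. These bounds are uniform in the truncation
parameter, hence pass to the principal value.
-/

open MeasureTheory Filter Set

theorem integrable_comp_abs_of_integrableOn_Ioi {E : Type*} [NormedAddCommGroup E] {g : ℝ → E}
    (hg : IntegrableOn g (Ioi 0)) : Integrable fun t => g |t| := by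
  have int_Ioi : IntegrableOn (fun t => g |t|) (Ioi 0) :=
    hg.congr_fun (fun t ht => by rw [abs_of_pos ht]) measurableSet_Ioi
  have int_Iic : IntegrableOn (fun t => g |t|) (Iic 0) := by
    have neg_embedding : MeasurableEmbedding fun t : ℝ => -t :=
      (Homeomorph.neg ℝ).measurableEmbedding
    rw [← Measure.map_neg_eq_self (volume : Measure ℝ), neg_embedding.integrableOn_map_iff]
    simp_rw [Function.comp_def, abs_neg, neg_preimage, neg_Iic, neg_zero]
    exact Iff.mpr integrableOn_Ici_iff_integrableOn_Ioi int_Ioi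
  rw [← integrableOn_univ, ← Iic_union_Ioi (a := (0 : ℝ))]
  exact int_Iic.union int_Ioi

theorem abs_setIntegral_le_two_mul_integral_Ioi {g h : ℝ → ℝ} {S : Set ℝ} (hS : MeasurableSet S)
    (x : ℝ) (hh : IntegrableOn h (Ioi 0)) (hh_nonneg : ∀ s, 0 ≤ s → 0 ≤ h s)
    (hgh : ∀ y ∈ S, |g y| ≤ h |x - y|) :
    |∫ y in S, g y| ≤ 2 * ∫ s in Ioi 0, h s := by
  have h_int : Integrable fun y => h |x - y| :=
    (integrable_comp_sub_left (fun t => h |t|) x).mpr (integrable_comp_abs_of_integrableOn_Ioi hh)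
  calc |∫ y in S, g y| ≤ ∫ y in S, |g y| := abs_integral_le_integral_abs
    _ ≤ ∫ y in S, h |x - y| :=
        integral_mono_of_nonneg (.of_forall fun _ => abs_nonneg _) h_int.integrableOn
          ((ae_restrict_iff' hS).mpr (.of_forall hgh))
    _ ≤ ∫ y, h |x - y| :=
        setIntegral_le_integral h_int (.of_forall fun _ => hh_nonneg _ (abs_nonneg _))
    _ = ∫ t, h |t| := integral_sub_left_eq_self (fun t => h |t|) volume x
    _ = 2 * ∫ s in Ioi 0, h s := integral_comp_abs

/-- The majorant of `|f x - f y| / |x - y|^{3/2}` as a function of `s = |x - y|`. -/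
noncomputable def splitPowerMajorant (a b δ s : ℝ) : ℝ :=
  if s ≤ δ then a * s ^ (-(1 / 2) : ℝ) else b * s ^ (-(3 / 2) : ℝ)

section splitPowerMajorant

variable {a b δ : ℝ}

theorem splitPowerMajorant_nonneg (ha : 0 ≤ a) (hb : 0 ≤ b) {s : ℝ} (hs : 0 ≤ s) :
    0 ≤ splitPowerMajorant a b δ s := by
  unfold splitPowerMajorant
  split_ifs
  exacts [mul_nonneg ha (Real.rpow_nonneg hs _), mul_nonneg hb (Real.rpow_nonneg hs _)]

theorem splitPowerMajorant_eqOn_Ioc : EqOn (splitPowerMajorant a b δ)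
    (fun s => a * s ^ (-(1 / 2) : ℝ)) (Ioc 0 δ) :=
  fun _ hs => if_pos hs.2

theorem splitPowerMajorant_eqOn_Ioi : EqOn (splitPowerMajorant a b δ)
    (fun s => b * s ^ (-(3 / 2) : ℝ)) (Ioi δ) :=
  fun _ hs => if_neg (not_le.mpr hs)

theorem integrableOn_splitPowerMajorant_Ioc (hδ : 0 ≤ δ) :
    IntegrableOn (splitPowerMajorant a b δ) (Ioc 0 δ) := by
  refine IntegrableOn.congr_fun ?_ splitPowerMajorant_eqOn_Ioc.symm measurableSet_Ioc
  rw [← intervalIntegrable_iff_integrableOn_Ioc_of_le hδ]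
  exact (intervalIntegral.intervalIntegrable_rpow' (by norm_num)).const_mul a

theorem integrableOn_splitPowerMajorant_Ioi (hδ : 0 < δ) :
    IntegrableOn (splitPowerMajorant a b δ) (Ioi δ) :=
  IntegrableOn.congr_fun
    ((integrableOn_Ioi_rpow_of_lt (a := -(3 / 2)) (by norm_num) hδ).const_mul b)
    splitPowerMajorant_eqOn_Ioi.symm measurableSet_Ioi

theorem integrableOn_splitPowerMajorant_Ioi_zero (hδ : 0 < δ) :
    IntegrableOn (splitPowerMajorant a b δ) (Ioi 0) := by
  rw [← Ioc_union_Ioi_eq_Ioi hδ.le]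
  exact (integrableOn_splitPowerMajorant_Ioc hδ.le).union (integrableOn_splitPowerMajorant_Ioi hδ)

theorem integral_splitPowerMajorant_Ioi_zero (hδ : 0 < δ) :
    ∫ s in Ioi 0, splitPowerMajorant a b δ s
      = 2 * a * δ ^ (1 / 2 : ℝ) + 2 * b * δ ^ (-(1 / 2) : ℝ) := by
  have near : ∫ s in Ioc 0 δ, splitPowerMajorant a b δ s = 2 * a * δ ^ (1 / 2 : ℝ) := by
    rw [setIntegral_congr_fun measurableSet_Ioc splitPowerMajorant_eqOn_Ioc,
      ← intervalIntegral.integral_of_le hδ.le, intervalIntegral.integral_const_mul,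
      integral_rpow (Or.inl (by norm_num)), Real.zero_rpow (by norm_num)]
    norm_num
    ring
  have far : ∫ s in Ioi δ, splitPowerMajorant a b δ s = 2 * b * δ ^ (-(1 / 2) : ℝ) := by
    rw [setIntegral_congr_fun measurableSet_Ioi splitPowerMajorant_eqOn_Ioi, integral_const_mul,
      integral_Ioi_rpow_of_lt (by norm_num) hδ]
    norm_num
    ring
  rw [← Ioc_union_Ioi_eq_Ioi hδ.le, setIntegral_union (Ioc_disjoint_Ioi le_rfl) measurableSet_Ioi
    (integrableOn_splitPowerMajorant_Ioc hδ.le) (integrableOn_splitPowerMajorant_Ioi hδ), near, far]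

end splitPowerMajorant

theorem abs_sign_mul_div_rpow_le_splitPowerMajorant {f : ℝ → ℝ} {M M' δ x y : ℝ}
    (hM : ∀ z, |f z| ≤ M) (hlip : ∀ u v, |f u - f v| ≤ M' * |u - v|) (hxy : x ≠ y) :
    |Real.sign (x - y) * (f x - f y) / |x - y| ^ (3 / 2 : ℝ)|
      ≤ splitPowerMajorant M' (2 * M) δ |x - y| := by
  have hpos : 0 < |x - y| := abs_pos.mpr (sub_ne_zero.mpr hxy)
  have hsign : |Real.sign (x - y)| = 1 := by
    rcases Real.sign_apply_eq_of_ne_zero _ (sub_ne_zero.mpr hxy) with h | h <;> simp [h]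
  have split_pow (c r : ℝ) :
      c * |x - y| ^ (r + 3 / 2) = c * |x - y| ^ r * |x - y| ^ (3 / 2 : ℝ) := by
    rw [mul_assoc, ← Real.rpow_add hpos]
  rw [abs_div, abs_mul, hsign, one_mul, abs_of_pos (Real.rpow_pos_of_pos hpos _),
    div_le_iff₀ (Real.rpow_pos_of_pos hpos _), splitPowerMajorant]
  split_ifs
  · calc |f x - f y| ≤ M' * |x - y| := hlip x y
      _ = M' * |x - y| ^ (-(1 / 2) : ℝ) * |x - y| ^ (3 / 2 : ℝ) := by
          rw [← split_pow]
          norm_num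
  · calc |f x - f y| ≤ |f x| + |f y| := abs_sub _ _
      _ ≤ 2 * M := by linarith [hM x, hM y]
      _ = 2 * M * |x - y| ^ (-(3 / 2) : ℝ) * |x - y| ^ (3 / 2 : ℝ) := by
          rw [← split_pow]
          norm_num

theorem abs_setIntegral_sign_mul_div_rpow_le {f : ℝ → ℝ} {M M' δ : ℝ} (hδ : 0 < δ)
    (hM : ∀ z, |f z| ≤ M) (hM' : 0 ≤ M') (hlip : ∀ u v, |f u - f v| ≤ M' * |u - v|) (x : ℝ)
    {η : ℝ} (hη : 0 < η) :
    |∫ y in {y : ℝ | η < |x - y|}, Real.sign (x - y) * (f x - f y) / |x - y| ^ (3 / 2 : ℝ)|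
      ≤ 4 * M' * δ ^ (1 / 2 : ℝ) + 8 * M * δ ^ (-(1 / 2) : ℝ) := by
  have hM0 : 0 ≤ M := (abs_nonneg _).trans (hM 0)
  have hS : MeasurableSet {y : ℝ | η < |x - y|} :=
    measurableSet_lt measurable_const (measurable_const.sub measurable_id).abs
  refine (abs_setIntegral_le_two_mul_integral_Ioi hS x
    (integrableOn_splitPowerMajorant_Ioi_zero hδ)
    (fun _ => splitPowerMajorant_nonneg hM' (by linarith))
    (fun y hy => abs_sign_mul_div_rpow_le_splitPowerMajorant hM hlip ?_)).trans_eq ?_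
  · rintro rfl
    exact hη.not_gt (by simpa using hy)
  · rw [integral_splitPowerMajorant_Ioi_zero hδ]
    ring

/-- bound for the principal-value operator HΛ^{1/2}. -/
theorem stmt_3 (f : ℝ → ℝ) (hf : Differentiable ℝ f)
    (hb : BddAbove (Set.range fun x => |f x|))
    (hb' : BddAbove (Set.range fun x => |deriv f x|))
    (Hf : ℝ → ℝ)
    (hH : ∀ x : ℝ, Tendsto
      (fun η : ℝ => ∫ y in {y : ℝ | η < |x - y|},
        Real.sign (x - y) * (f x - f y) / |x - y| ^ (3 / 2 : ℝ))
      (nhdsWithin 0 (Set.Ioi 0)) (nhds (Hf x)))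
    (δ : ℝ) (hδ : 0 < δ) (x : ℝ) :
    |Hf x| ≤ 12 * δ ^ (-(1 / 2) : ℝ) * (⨆ y, |f y|)
      + 8 * δ ^ ((1 / 2) : ℝ) * (⨆ y, |deriv f y|) := by
  set M := ⨆ y, |f y|
  set M' := ⨆ y, |deriv f y|
  have hM : ∀ y, |f y| ≤ M := le_ciSup hb
  have hM' : ∀ y, |deriv f y| ≤ M' := le_ciSup hb'
  have hM0 : 0 ≤ M := (abs_nonneg _).trans (hM 0)
  have hM'0 : 0 ≤ M' := (abs_nonneg _).trans (hM' 0)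
  have hlip (u v : ℝ) : |f u - f v| ≤ M' * |u - v| :=
    convex_univ.norm_image_sub_le_of_norm_deriv_le (fun z _ => hf z) (fun z _ => hM' z)
      (mem_univ v) (mem_univ u)
  refine (le_of_tendsto (hH x).abs <| eventually_nhdsWithin_of_forall fun η hη =>
    abs_setIntegral_sign_mul_div_rpow_le hδ hM hM'0 hlip x hη).trans ?_
  have := mul_nonneg (Real.rpow_nonneg hδ.le (-(1 / 2) : ℝ)) hM0
  have := mul_nonneg (Real.rpow_nonneg hδ.le (1 / 2 : ℝ)) hM'0
  linarith
end

section
/- Let 0 < γ < 1/2, let m₁ < 0 and t₂ > t₁ with 1 + (1-γ/2) m₁ (t₂-t₁) > 0. Then (1-γ) m₁ / (1 + (1+γ/2)(1-γ) m₁ (t₂-t₁)) > (1-γ) · (m₁ / (1 + (1-γ/2) m₁ (t₂-t₁))). -/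
theorem div_lt_div_of_neg_left {α : Type*} [Field α] [LinearOrder α] [IsStrictOrderedRing α]
    {a b c : α} (ha : a < 0) (hb : 0 < b) (hbc : b < c) : a / b < a / c := by
  simpa only [neg_div, neg_lt_neg_iff] using div_lt_div_of_pos_left (neg_pos.2 ha) hb hbc

/-- Since `(1 + γ/2)(1 - γ) = (1 - γ/2) - γ²/2`, the two denominators differ by `-γ²/2 · m s > 0`. -/
theorem riccati_denominator_lt {γ m s : ℝ} (hγ : γ ≠ 0) (hm : m < 0) (hs : 0 < s) :
    1 + (1 - γ / 2) * m * s < 1 + (1 + γ / 2) * (1 - γ) * m * s := by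
  have hms : 0 < γ ^ 2 / 2 * -(m * s) :=
    mul_pos (by positivity) (neg_pos.2 (mul_neg_of_neg_of_pos hm hs))
  linear_combination hms

theorem stmt_7 (γ m₁ t₁ t₂ : ℝ) (hγ : 0 < γ) (hγ' : γ < 1 / 2) (hm : m₁ < 0)
    (ht : t₁ < t₂) (hden : 0 < 1 + (1 - γ / 2) * m₁ * (t₂ - t₁)) :
    (1 - γ) * m₁ / (1 + (1 + γ / 2) * (1 - γ) * m₁ * (t₂ - t₁))
      > (1 - γ) * (m₁ / (1 + (1 - γ / 2) * m₁ * (t₂ - t₁))) := by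
  have hnum : (1 - γ) * m₁ < 0 := mul_neg_of_pos_of_neg (by linarith) hm
  rw [gt_iff_lt, mul_div_assoc']
  exact div_lt_div_of_neg_left hnum hden (riccati_denominator_lt hγ.ne' hm (sub_pos.2 ht))
end
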